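/- arXiv:2309.01283 — 4 statements merged into one kernel-verified Lean document; each statement's English description precedes it below -/
import Mathlib

section
/- Let m, k ≥ 2 be integers. Any collection of k^m axis-parallel cubes in ℝ^m with side lengths s_0 ≥ s_1 ≥ ⋯ ≥ s_{k^m - 1} ≥ 0 can be packed (translated to have pairwise disjoint interiors) inside an axis-parallel cube of side length s = s_0 + s_{1^m} + s_{2^m} + ⋯ + s_{(k-1)^m}, i.e. s = Σ_{j=0}^{k-1} s_{j^m}. -/
/-!
Cut `[0, ∑_{j<k} s (j^m)]` into consecutive intervals of lengths `s (0^m), …, s ((k-1)^m)`. Their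
products form a grid of `k^m` boxes; the box of a cell `a : Fin m → Fin k` has side `s ((a d)^m)`
in direction `d`. List the cells by increasing maximal coordinate. The `(a d)^m` cells with all
coordinates below `a d` have a smaller maximal coordinate than `a`, so they precede `a`; hence the
`i`-th cell `a` satisfies `(a d)^m ≤ i` for every `d`, and as `s` is nonincreasing its box holds a
cube of side `s i`.
-/

/-- The axis-parallel cube in `ℝ^m` with lower corner `x` and side length `s`. -/
def cube {m : ℕ} (x : Fin m → ℝ) (s : ℝ) : Set (Fin m → ℝ) :=
  {y | ∀ d, x d ≤ y d ∧ y d ≤ x d + s}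

open Finset

theorem exists_equiv_fin_card_lt_le {α β : Type*} [Fintype α] [LinearOrder β] (ℓ : α → β) :
    ∃ e : Fin (Fintype.card α) ≃ α, ∀ i, #{b | ℓ b < ℓ (e i)} ≤ i := by
  -- enumerate `α` increasingly for a linear order refining the preorder pulled back along `ℓ`
  let _ : LinearOrder α := LinearOrder.lift' (fun a => toLex (ℓ a, Fintype.equivFin α a))
    fun a b h => (Fintype.equivFin α).injective (Prod.ext_iff.1 (toLex.injective h)).2
  let e := Fintype.orderIsoFinOfCardEq α rfl
  refine ⟨e.toEquiv, fun i => ?_⟩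
  have hlt : ∀ a b : α, ℓ b < ℓ a → b < a := fun a b h =>
    show toLex (ℓ b, _) < toLex (ℓ a, _) from Prod.Lex.toLex_lt_toLex.2 (Or.inl h)
  calc #{b | ℓ b < ℓ (e i)} ≤ #{b | b < e i} := card_le_card fun b hb => by
        simp only [mem_filter, mem_univ, true_and] at hb ⊢; exact hlt _ _ hb
    _ = #{j | j < i} := by
        rw [← card_map e.toEquiv.toEmbedding]
        congr 1; ext b
        simp [e.symm_apply_lt]
    _ = i := by rw [filter_gt_eq_Iio, Fin.card_Iio]

theorem sup_lt_sup_of_forall_lt {m k : ℕ} {a b : Fin m → Fin k} (d : Fin m)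
    (h : ∀ d', b d' < a d) :
    (univ.sup fun d => (b d : ℕ)) < univ.sup fun d => (a d : ℕ) := by
  have hpos : (b d : ℕ) < a d := h d
  have hbot : (⊥ : ℕ) < a d := by simp only [bot_eq_zero']; omega
  exact ((Finset.sup_lt_iff hbot).2 fun d' _ => h d').trans_le
    (le_sup (f := fun d => (a d : ℕ)) (mem_univ d))

theorem exists_equiv_fin_pow_le (m k : ℕ) :
    ∃ e : Fin (k ^ m) ≃ (Fin m → Fin k), ∀ i d, (e i d : ℕ) ^ m ≤ i := by
  classical
  obtain ⟨e, he⟩ :=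
    exists_equiv_fin_card_lt_le fun a : Fin m → Fin k => univ.sup fun d => (a d : ℕ)
  have hcard : k ^ m = Fintype.card (Fin m → Fin k) := by simp
  refine ⟨(finCongr hcard).trans e, fun i d => ?_⟩
  set a := e (finCongr hcard i)
  calc (a d : ℕ) ^ m = #(Fintype.piFinset fun _ => Iio (a d)) := by
        rw [Fintype.card_piFinset]; simp [Fin.card_Iio]
    _ ≤ #{b | (univ.sup fun d => (b d : ℕ)) < univ.sup fun d => (a d : ℕ)} :=
        card_le_card fun b hb => by
          simp only [Fintype.mem_piFinset, mem_Iio] at hb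
          simpa only [mem_filter, mem_univ, true_and] using sup_lt_sup_of_forall_lt d hb
    _ ≤ i := he _

theorem interior_cube {m : ℕ} (x : Fin m → ℝ) (s : ℝ) :
    interior (cube x s) = {y | ∀ d, x d < y d ∧ y d < x d + s} := by
  have hpi : cube x s = Set.univ.pi fun d => Set.Icc (x d) (x d + s) := by
    ext y; simp only [cube, Set.mem_ofPred_eq, Set.mem_pi, Set.mem_univ, Set.mem_Icc, forall_const]
  rw [hpi, interior_pi_set Set.finite_univ]
  ext y; simp

theorem disjoint_interior_cube_of_add_le {m : ℕ} {x x' : Fin m → ℝ} {s s' : ℝ} (d : Fin m)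
    (h : x d + s ≤ x' d) : Disjoint (interior (cube x s)) (interior (cube x' s')) := by
  rw [interior_cube, interior_cube, Set.disjoint_left]
  intro y hy hy'
  linarith [(hy d).2, (hy' d).1]

section Grid

variable {m k : ℕ} {w : ℕ → ℝ}

def gridCorner (w : ℕ → ℝ) (a : Fin m → Fin k) : Fin m → ℝ :=
  fun d => ∑ j ∈ range (a d), w j

theorem sum_range_le_sum_range (hw : ∀ j < k, 0 ≤ w j) {a b : ℕ} (hab : a ≤ b) (hb : b ≤ k) :
    ∑ j ∈ range a, w j ≤ ∑ j ∈ range b, w j :=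
  sum_le_sum_of_subset_of_nonneg (range_subset_range.2 hab) fun j hj _ =>
    hw j ((mem_range.1 hj).trans_le hb)

theorem gridCorner_add_le (a : Fin m → Fin k) {t : ℝ} (d : Fin m) (ht : t ≤ w (a d)) :
    gridCorner w a d + t ≤ ∑ j ∈ range (a d + 1), w j := by
  rw [sum_range_succ, gridCorner]; linarith

theorem cube_gridCorner_subset (hw : ∀ j < k, 0 ≤ w j) (a : Fin m → Fin k) {t : ℝ}
    (ht : ∀ d, t ≤ w (a d)) : cube (gridCorner w a) t ⊆ cube 0 (∑ j ∈ range k, w j) := by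
  intro y hy d
  have hlo : 0 ≤ gridCorner w a d := by
    simpa [gridCorner] using sum_range_le_sum_range hw (Nat.zero_le (a d)) (a d).isLt.le
  have hhi := gridCorner_add_le a d (ht d)
  have hk := sum_range_le_sum_range hw (a d).isLt le_rfl
  simp only [Pi.zero_apply, zero_add]
  constructor <;> linarith [hy d]

theorem disjoint_interior_cube_gridCorner (hw : ∀ j < k, 0 ≤ w j) {a b : Fin m → Fin k}
    (hab : a ≠ b) {t t' : ℝ} (ht : ∀ d, t ≤ w (a d)) (ht' : ∀ d, t' ≤ w (b d)) :
    Disjoint (interior (cube (gridCorner w a) t)) (interior (cube (gridCorner w b) t')) := by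
  obtain ⟨d, hd⟩ := Function.ne_iff.1 hab
  rcases lt_or_gt_of_ne hd with hlt | hgt
  · exact disjoint_interior_cube_of_add_le d
      ((gridCorner_add_le a d (ht d)).trans (sum_range_le_sum_range hw hlt (b d).isLt.le))
  · exact (disjoint_interior_cube_of_add_le d
      ((gridCorner_add_le b d (ht' d)).trans (sum_range_le_sum_range hw hgt (a d).isLt.le))).symm

end Grid

theorem square_packing_general (m k : ℕ) (hm : 2 ≤ m)
    (s : ℕ → ℝ) (hnn : ∀ i, i < k ^ m → 0 ≤ s i)
    (hmono : ∀ i j, i ≤ j → j < k ^ m → s j ≤ s i) :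
    ∃ x : ℕ → Fin m → ℝ,
      (∀ i, i < k ^ m →
        cube (x i) (s i) ⊆ cube (0 : Fin m → ℝ) (∑ j ∈ Finset.range k, s (j ^ m))) ∧
      (∀ i j, i < k ^ m → j < k ^ m → i ≠ j →
        Disjoint (interior (cube (x i) (s i))) (interior (cube (x j) (s j)))) := by
  obtain ⟨e, he⟩ := exists_equiv_fin_pow_le m k
  have hw : ∀ j < k, 0 ≤ s (j ^ m) := fun j hj =>
    hnn _ (Nat.pow_lt_pow_left hj (by omega))
  have hfit : ∀ i (hi : i < k ^ m) d, s i ≤ s ((e ⟨i, hi⟩ d : ℕ) ^ m) := fun i hi d =>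
    hmono _ _ (he _ d) hi
  refine ⟨fun i => if hi : i < k ^ m then gridCorner (fun j => s (j ^ m)) (e ⟨i, hi⟩) else 0,
    fun i hi => ?_, fun i j hi hj hij => ?_⟩
  · simpa only [dif_pos hi] using cube_gridCorner_subset hw _ (hfit i hi)
  · simp only [dif_pos hi, dif_pos hj]
    exact disjoint_interior_cube_gridCorner hw (e.injective.ne (Fin.ne_of_val_ne hij))
      (hfit i hi) (hfit j hj)

/-- Any collection of `k^m` axis-parallel cubes in `ℝ^m` of descending side lengths
`s 0 ≥ s 1 ≥ ⋯ ≥ s (k^m - 1) ≥ 0` can be packed (translated, with pairwise disjoint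
interiors) inside an axis-parallel cube of side length `∑_{j<k} s (j^m)`. -/
theorem square_packing (m k : ℕ) (hm : 2 ≤ m) (hk : 2 ≤ k)
    (s : ℕ → ℝ) (hnn : ∀ i, i < k ^ m → 0 ≤ s i)
    (hmono : ∀ i j, i ≤ j → j < k ^ m → s j ≤ s i) :
    ∃ x : ℕ → Fin m → ℝ,
      (∀ i, i < k ^ m →
        cube (x i) (s i) ⊆ cube (0 : Fin m → ℝ) (∑ j ∈ Finset.range k, s (j ^ m))) ∧
      (∀ i j, i < k ^ m → j < k ^ m → i ≠ j →
        Disjoint (interior (cube (x i) (s i))) (interior (cube (x j) (s j)))) :=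
  square_packing_general m k hm s hnn hmono
end

section
/- For any two axis-parallel cubes in ℝ^m (m ≥ 1) with side lengths s_0 and s_1, if both are contained (as translates with disjoint interiors) in an axis-parallel cube of side length s, then s ≥ s_0 + s_1. -/
lemma openBox_subset_interior {m : ℕ} (x : Fin m → ℝ) (s : ℝ) :
    {y : Fin m → ℝ | ∀ d, x d < y d ∧ y d < x d + s} ⊆ interior (cube x s) := by
  apply interior_maximal
  · intro y hy d
    exact ⟨(hy d).1.le, (hy d).2.le⟩
  · have h : {y : Fin m → ℝ | ∀ d, x d < y d ∧ y d < x d + s} =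
        Set.pi Set.univ (fun d => Set.Ioo (x d) (x d + s)) := by
      ext z; simp [Set.mem_pi, Set.mem_Ioo]
    rw [h]
    exact isOpen_set_pi Set.finite_univ (fun d _ => isOpen_Ioo)

/-- If two axis-parallel cubes of side lengths `s₀` and `s₁` in `ℝ^m` have disjoint
interiors and are both contained in an axis-parallel cube of side length `s`, then
`s ≥ s₀ + s₁`. -/
theorem two_cubes_side_bound (m : ℕ) (hm : 1 ≤ m) (s s₀ s₁ : ℝ)
    (hs₀ : 0 ≤ s₀) (hs₁ : 0 ≤ s₁) (x₀ x₁ y : Fin m → ℝ)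
    (h₀ : cube x₀ s₀ ⊆ cube y s) (h₁ : cube x₁ s₁ ⊆ cube y s)
    (hdisj : Disjoint (interior (cube x₀ s₀)) (interior (cube x₁ s₁))) :
    s₀ + s₁ ≤ s := by
  by_contra hc
  push_neg at hc
  -- corner facts for cube 0
  have hc₀lo : ∀ d, y d ≤ x₀ d := fun d =>
    (h₀ (fun d => ⟨le_refl _, by linarith⟩) d).1
  have hc₀hi : ∀ d, x₀ d + s₀ ≤ y d + s := by
    intro d
    have hmem : (fun d => x₀ d + s₀) ∈ cube x₀ s₀ := by
      refine fun d' => ⟨?_, ?_⟩ <;> show (_ : ℝ) ≤ _ <;> beta_reduce <;> linarith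
    exact (h₀ hmem d).2
  have hc₁lo : ∀ d, y d ≤ x₁ d := fun d =>
    (h₁ (fun d => ⟨le_refl _, by linarith⟩) d).1
  have hc₁hi : ∀ d, x₁ d + s₁ ≤ y d + s := by
    intro d
    have hmem : (fun d => x₁ d + s₁) ∈ cube x₁ s₁ := by
      refine fun d' => ⟨?_, ?_⟩ <;> show (_ : ℝ) ≤ _ <;> beta_reduce <;> linarith
    exact (h₁ hmem d).2
  -- s₀ and s₁ must be positive
  have d0 : Fin m := ⟨0, hm⟩
  have hs : s₀ ≤ s := by have := hc₀lo d0; have := hc₀hi d0; linarith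
  have hs' : s₁ ≤ s := by have := hc₁lo d0; have := hc₁hi d0; linarith
  have hs₀pos : 0 < s₀ := by by_contra h; push_neg at h; linarith
  have hs₁pos : 0 < s₁ := by by_contra h; push_neg at h; linarith
  -- the overlap point
  set z : Fin m → ℝ :=
    fun d => (max (x₀ d) (x₁ d) + min (x₀ d + s₀) (x₁ d + s₁)) / 2 with hz
  have hlt : ∀ d, max (x₀ d) (x₁ d) < min (x₀ d + s₀) (x₁ d + s₁) := by
    intro d
    have h01 : x₀ d < x₁ d + s₁ := by
      have := hc₀hi d; have := hc₁lo d; linarith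
    have h10 : x₁ d < x₀ d + s₀ := by
      have := hc₁hi d; have := hc₀lo d; linarith
    rcases le_total (x₀ d) (x₁ d) with h | h <;>
      rcases le_total (x₀ d + s₀) (x₁ d + s₁) with h' | h' <;>
      simp [max_eq_left, max_eq_right, min_eq_left, min_eq_right, h, h'] <;>
      linarith
  have hz₀ : z ∈ interior (cube x₀ s₀) := by
    apply openBox_subset_interior
    intro d
    have := hlt d
    have h1 : x₀ d ≤ max (x₀ d) (x₁ d) := le_max_left _ _
    have h2 : min (x₀ d + s₀) (x₁ d + s₁) ≤ x₀ d + s₀ := min_le_left _ _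
    constructor <;> simp only [hz] <;> linarith
  have hz₁ : z ∈ interior (cube x₁ s₁) := by
    apply openBox_subset_interior
    intro d
    have := hlt d
    have h1 : x₁ d ≤ max (x₀ d) (x₁ d) := le_max_right _ _
    have h2 : min (x₀ d + s₀) (x₁ d + s₁) ≤ x₁ d + s₁ := min_le_right _ _
    constructor <;> simp only [hz] <;> linarith
  exact (hdisj.le_bot ⟨hz₀, hz₁⟩).elim
end

section
/- Let Q be a cube in a tree of metric cubes, let n ≥ 1 and let N̂ > 0 satisfy #Child(R) ≤ N̂ for every descendant R of Q within n-1 generations. For positive integers k ≤ n·N̂/(N̂+1), the number of n-th generation descendants R of Q whose chain from Q to R contains at least n-k central children satisfies #K_Q(n,k) ≤ N̂^k · n^n/(k^k·(n-k)^{n-k}). -/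
/-!
Weight a node `s` of depth `m` by `y ^ (number of central steps of s)`. Among the at most `N̂`
children of a node at most one is central, so passing from depth `m` to `m + 1` multiplies the
total weight by at most `y + N̂`, and the depth-`n` nodes weigh at most `(y + N̂) ^ n` in total.
For `y ≥ 1` every node of `K(n,k)` weighs at least `y ^ (n - k)`, whence
`#K(n,k) ≤ (y + N̂) ^ n / y ^ (n - k)`. The choice `y = N̂ (n - k) / k`, which minimises the right
side and satisfies `y ≥ 1` exactly when `k ≤ n N̂ / (N̂ + 1)`, gives the bound.
-/

open Finset

theorem List.eq_dropLast_append_getLastD {α : Type*} {s : List α} (hs : s ≠ []) (d : α) :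
    s = s.dropLast ++ [s.getLastD d] := by
  obtain ⟨l, a, rfl⟩ := List.eq_nil_or_concat s |>.resolve_left hs
  simp

theorem Finset.sum_eq_sum_image_getLastD {α M : Type*} [DecidableEq α] [AddCommMonoid M]
    (f : List α → M) (d : α) {l : List α} {F : Finset (List α)}
    (hF : ∀ s ∈ F, s ≠ [] ∧ s.dropLast = l) :
    ∑ s ∈ F, f s = ∑ i ∈ F.image (·.getLastD d), f (l ++ [i]) := by
  have hdecomp : ∀ s ∈ F, s = l ++ [s.getLastD d] := fun s hs => by
    rw [← (hF s hs).2]; exact List.eq_dropLast_append_getLastD (hF s hs).1 d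
  rw [sum_image fun s hs t ht hst => by rw [hdecomp s hs, hdecomp t ht, hst]]
  exact sum_congr rfl fun s hs => by rw [← hdecomp s hs]

section

variable {T : Set (List ℕ)} {n : ℕ} {N y : ℝ}

theorem pow_count_zero_append_singleton (y : ℝ) (l : List ℕ) (i : ℕ) :
    y ^ (l ++ [i]).count 0 = y ^ l.count 0 * if i = 0 then y else 1 := by
  by_cases hi : i = 0 <;> simp [pow_succ, hi]

theorem sum_ite_eq_zero_le (hy : 0 ≤ y) (D : Finset ℕ) :
    ∑ i ∈ D, (if i = 0 then y else 1) ≤ y + #D := by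
  calc ∑ i ∈ D, (if i = 0 then y else 1)
      ≤ ∑ i ∈ D, ((if i = 0 then y else 0) + 1) :=
        sum_le_sum fun i _ => by split_ifs <;> linarith
    _ ≤ y + #D := by
        rw [sum_add_distrib, sum_ite_eq', sum_const, nsmul_one]
        split_ifs <;> simp [hy]

theorem sum_pow_count_zero_append_le (hy : 0 ≤ y) (l : List ℕ) {D : Finset ℕ}
    (hD : (#D : ℝ) ≤ N) :
    ∑ i ∈ D, y ^ (l ++ [i]).count 0 ≤ y ^ l.count 0 * (y + N) := by
  simp_rw [pow_count_zero_append_singleton, ← mul_sum]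
  gcongr
  linarith [sum_ite_eq_zero_le hy D]

theorem sum_filter_dropLast_eq_pow_count_zero_le (hy : 0 ≤ y) {l : List ℕ}
    (hfin : {i : ℕ | l ++ [i] ∈ T}.Finite) (hcard : ({i : ℕ | l ++ [i] ∈ T}.ncard : ℝ) ≤ N)
    {S : Finset (List ℕ)} (hS : ∀ s ∈ S, s ∈ T ∧ s ≠ []) :
    ∑ s ∈ S with s.dropLast = l, y ^ s.count 0 ≤ y ^ l.count 0 * (y + N) := by
  set F := S.filter (·.dropLast = l)
  have hF : ∀ s ∈ F, s ≠ [] ∧ s.dropLast = l := fun s hs =>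
    ⟨(hS s (mem_filter.mp hs).1).2, (mem_filter.mp hs).2⟩
  have hD : (F.image (·.getLastD 0) : Set ℕ) ⊆ {i : ℕ | l ++ [i] ∈ T} := by
    intro i hi
    obtain ⟨s, hs, rfl⟩ := mem_image.mp hi
    change l ++ [s.getLastD 0] ∈ T
    rw [← (hF s hs).2, ← List.eq_dropLast_append_getLastD (hF s hs).1 0]
    exact (hS s (mem_filter.mp hs).1).1
  have hDN : (#(F.image (·.getLastD 0)) : ℝ) ≤ N := by
    have := Set.ncard_le_ncard hD hfin
    rw [Set.ncard_coe_finset] at this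
    exact le_trans (by exact_mod_cast this) hcard
  rw [sum_eq_sum_image_getLastD _ 0 hF]
  exact sum_pow_count_zero_append_le hy l hDN

theorem sum_pow_count_zero_le (hN : 0 ≤ N) (hy : 0 ≤ y)
    (hpref : ∀ (l : List ℕ) (i : ℕ), l ++ [i] ∈ T → l ∈ T)
    (hchild : ∀ l ∈ T, l.length < n →
      {i : ℕ | l ++ [i] ∈ T}.Finite ∧ (({i : ℕ | l ++ [i] ∈ T}.ncard : ℝ) ≤ N)) :
    ∀ m ≤ n, ∀ S : Finset (List ℕ), (∀ s ∈ S, s ∈ T ∧ s.length = m) →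
      ∑ s ∈ S, y ^ s.count 0 ≤ (y + N) ^ m := by
  intro m
  induction m with
  | zero =>
    intro _ S hS
    have hS_root : S ⊆ {[]} := fun s hs => by simp [List.length_eq_zero_iff.mp (hS s hs).2]
    calc ∑ s ∈ S, y ^ s.count 0 ≤ ∑ s ∈ {[]}, y ^ s.count 0 :=
          sum_le_sum_of_subset_of_nonneg hS_root fun _ _ _ => by positivity
      _ = (y + N) ^ 0 := by simp
  | succ m ih =>
    intro hm S hS
    have hS' : ∀ s ∈ S, s ∈ T ∧ s ≠ [] := fun s hs =>
      ⟨(hS s hs).1, fun h => by simpa [h] using (hS s hs).2⟩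
    have hP : ∀ l ∈ S.image List.dropLast, l ∈ T ∧ l.length = m := by
      simp only [mem_image, forall_exists_index, and_imp]
      rintro _ s hs rfl
      refine ⟨hpref _ (s.getLastD 0) ?_, by simp [(hS s hs).2]⟩
      rw [← List.eq_dropLast_append_getLastD (hS' s hs).2 0]
      exact (hS s hs).1
    have hfiber : ∀ l ∈ S.image List.dropLast,
        ∑ s ∈ S with s.dropLast = l, y ^ s.count 0 ≤ y ^ l.count 0 * (y + N) := fun l hl =>
      have hchild_l := hchild l (hP l hl).1 (by rw [(hP l hl).2]; omega)
      sum_filter_dropLast_eq_pow_count_zero_le hy hchild_l.1 hchild_l.2 hS'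
    calc ∑ s ∈ S, y ^ s.count 0
        = ∑ l ∈ S.image List.dropLast, ∑ s ∈ S with s.dropLast = l, y ^ s.count 0 :=
          (sum_fiberwise_of_maps_to (fun s hs => mem_image_of_mem _ hs) _).symm
      _ ≤ ∑ l ∈ S.image List.dropLast, y ^ l.count 0 * (y + N) := sum_le_sum hfiber
      _ = (∑ l ∈ S.image List.dropLast, y ^ l.count 0) * (y + N) := (sum_mul ..).symm
      _ ≤ (y + N) ^ m * (y + N) := by
          gcongr
          exact ih (by omega) _ hP
      _ = (y + N) ^ (m + 1) := (pow_succ _ _).symm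

theorem finite_sep_length_eq (hN : 0 ≤ N)
    (hpref : ∀ (l : List ℕ) (i : ℕ), l ++ [i] ∈ T → l ∈ T)
    (hchild : ∀ l ∈ T, l.length < n →
      {i : ℕ | l ++ [i] ∈ T}.Finite ∧ (({i : ℕ | l ++ [i] ∈ T}.ncard : ℝ) ≤ N)) :
    {l ∈ T | l.length = n}.Finite := by
  refine Set.not_infinite.mp fun hinf => ?_
  obtain ⟨S, hS, hcard⟩ := hinf.exists_subset_card_eq (⌈(1 + N) ^ n⌉₊ + 1)
  have hsum := sum_pow_count_zero_le hN zero_le_one hpref hchild n le_rfl S fun s hs => hS hs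
  simp only [one_pow, sum_const, nsmul_one, hcard] at hsum
  push_cast at hsum
  linarith [Nat.le_ceil ((1 + N) ^ n)]

theorem ncard_mul_pow_le (hN : 0 ≤ N) (hy : 1 ≤ y)
    (hpref : ∀ (l : List ℕ) (i : ℕ), l ++ [i] ∈ T → l ∈ T)
    (hchild : ∀ l ∈ T, l.length < n →
      {i : ℕ | l ++ [i] ∈ T}.Finite ∧ (({i : ℕ | l ++ [i] ∈ T}.ncard : ℝ) ≤ N)) (j : ℕ) :
    {l ∈ T | l.length = n ∧ j ≤ l.count 0}.Finite ∧
      ({l ∈ T | l.length = n ∧ j ≤ l.count 0}.ncard : ℝ) * y ^ j ≤ (y + N) ^ n := by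
  have hfin : {l ∈ T | l.length = n ∧ j ≤ l.count 0}.Finite :=
    (finite_sep_length_eq hN hpref hchild).subset fun l hl => ⟨hl.1, hl.2.1⟩
  refine ⟨hfin, ?_⟩
  rw [Set.ncard_eq_toFinset_card _ hfin, ← nsmul_eq_mul]
  calc #hfin.toFinset • y ^ j ≤ ∑ l ∈ hfin.toFinset, y ^ l.count 0 :=
        card_nsmul_le_sum _ _ _ fun l hl => pow_le_pow_right₀ hy (hfin.mem_toFinset.mp hl).2.2
    _ ≤ (y + N) ^ n := sum_pow_count_zero_le hN (by linarith) hpref hchild n le_rfl _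
        fun l hl => ⟨(hfin.mem_toFinset.mp hl).1, (hfin.mem_toFinset.mp hl).2.1⟩

end

theorem add_pow_div_pow_eq {N k m : ℝ} (hN : N ≠ 0) (hk : k ≠ 0) (hm : m ≠ 0) (p q : ℕ) :
    (N * m / k + N) ^ (p + q) / (N * m / k) ^ q =
      N ^ p * (k + m) ^ (p + q) / (k ^ p * m ^ q) := by
  rw [show N * m / k + N = N * (k + m) / k by field_simp; ring]
  simp only [div_pow, mul_pow, pow_add]
  field_simp

theorem central_descendants_count_general (n k : ℕ) (hk : 0 < k) (Nhat : ℝ) (hN : 0 < Nhat)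
    (hkn : (k : ℝ) ≤ (n : ℝ) * Nhat / (Nhat + 1))
    (T : Set (List ℕ))
    (hpref : ∀ (l : List ℕ) (i : ℕ), l ++ [i] ∈ T → l ∈ T)
    (hchild : ∀ l ∈ T, l.length < n →
      {i : ℕ | l ++ [i] ∈ T}.Finite ∧ (({i : ℕ | l ++ [i] ∈ T}.ncard : ℝ) ≤ Nhat)) :
    {l ∈ T | l.length = n ∧ n - k ≤ l.count 0}.Finite ∧
    (({l ∈ T | l.length = n ∧ n - k ≤ l.count 0}.ncard : ℝ) ≤
      Nhat ^ k * (n : ℝ) ^ n / ((k : ℝ) ^ k * (((n - k : ℕ) : ℝ)) ^ (n - k))) := by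
  rw [le_div_iff₀ (by positivity)] at hkn
  have hk_le : (k : ℝ) ≤ n := by nlinarith
  obtain ⟨m, rfl⟩ := Nat.exists_eq_add_of_le (show k ≤ n by exact_mod_cast hk_le)
  rw [Nat.add_sub_cancel_left]
  push_cast at hkn ⊢
  have hkR : (0 : ℝ) < k := by exact_mod_cast hk
  have hmR : (0 : ℝ) < m := by by_contra! h; nlinarith
  have hy : 1 ≤ Nhat * m / k := (one_le_div hkR).mpr (by nlinarith)
  obtain ⟨hfin, hcard⟩ := ncard_mul_pow_le hN.le hy hpref hchild m
  refine ⟨hfin, ?_⟩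
  rw [← add_pow_div_pow_eq hN.ne' hkR.ne' hmR.ne']
  exact (le_div_iff₀ (by positivity)).mpr hcard

/-- Cardinality estimate for descendants with many central children. We model a
rooted tree as a prefix-closed set `T` of lists of naturals (the root is `[]`,
the children of `l` are the lists `l ++ [i] ∈ T`, and the central/marked child
corresponds to `i = 0`). If every node within `n-1` generations of the root has
at most `N̂` children, and `k` is a positive integer with `k ≤ n·N̂/(N̂+1)`, then
the set `K(n,k)` of depth-`n` descendants whose chain from the root contains at
least `n-k` central children (equivalently, at most `k` non-central steps) has
cardinality at most `N̂^k · n^n / (k^k (n-k)^{n-k})`. -/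
theorem central_descendants_count (n k : ℕ) (hk : 0 < k) (Nhat : ℝ) (hN : 0 < Nhat)
    (hkn : (k : ℝ) ≤ (n : ℝ) * Nhat / (Nhat + 1))
    (T : Set (List ℕ)) (hroot : [] ∈ T)
    (hpref : ∀ (l : List ℕ) (i : ℕ), l ++ [i] ∈ T → l ∈ T)
    (hchild : ∀ l ∈ T, l.length < n →
      {i : ℕ | l ++ [i] ∈ T}.Finite ∧ (({i : ℕ | l ++ [i] ∈ T}.ncard : ℝ) ≤ Nhat)) :
    {l ∈ T | l.length = n ∧ n - k ≤ l.count 0}.Finite ∧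
    (({l ∈ T | l.length = n ∧ n - k ≤ l.count 0}.ncard : ℝ) ≤
      Nhat ^ k * (n : ℝ) ^ n / ((k : ℝ) ^ k * (((n - k : ℕ) : ℝ)) ^ (n - k))) :=
  central_descendants_count_general n k hk Nhat hN hkn T hpref hchild
end

section
/- Let X, Y be metric spaces with X compact, let S ≥ 0, and let (f_l : E_l → Y)_{l≥1} be a sequence of S-Lipschitz maps with finite domains E_l ⊆ X. Then there exist a compact set E ⊆ X, an S-Lipschitz map f : E → Y, and a subsequence (l_i) such that the graphs Γ_{l_i} = {(x, f_{l_i}(x)) : x ∈ E_{l_i}} converge in the Hausdorff metric (on nonempty closed subsets of X × Y, Y compact) to the graph of f. In particular, any point y ∈ Y that is a limit of points y_i ∈ f_{l_i}(E_{l_i}) belongs to f(E). -/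
open Metric Filter Set Topology TopologicalSpace
open scoped NNReal

/-!
The graphs `Γₗ` are nonempty compact subsets of the compact space `X × Y`, so by Blaschke
selection a subsequence converges in the Hausdorff metric to some `Γ`. Points of `Γ` are limits
of points of the `Γₗ`, hence the closed condition `d(y, y') ≤ S d(x, x')` passes from pairs of
points of `Γₗ` to pairs of points of `Γ`. This makes `Γ` the graph of an `S`-Lipschitz map on its
projection `K` to `X`. Conversely limits of points of the `Γₗ` lie in `Γ`, which gives the
statement about limits of points of the images.
-/

namespace TopologicalSpace.NonemptyCompacts

variable {α : Type*} [MetricSpace α] {ι : Type*} {l : Filter ι}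
  {A : ι → NonemptyCompacts α} {B : NonemptyCompacts α}

theorem exists_tendsto_of_mem (hA : Tendsto A l (𝓝 B)) {p : α} (hp : p ∈ B) :
    ∃ q : ι → α, (∀ i, q i ∈ A i) ∧ Tendsto q l (𝓝 p) := by
  choose q hqA hq using fun i => (A i).isCompact.exists_infDist_eq_dist (A i).nonempty p
  refine ⟨q, hqA, tendsto_iff_dist_tendsto_zero.2 ?_⟩
  have h := ((lipschitz_infDist_set p).continuous.tendsto B).comp hA
  rw [infDist_zero_of_mem hp] at h
  exact h.congr fun i => (hq i).trans (dist_comm _ _)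

theorem mem_of_tendsto [l.NeBot] (hA : Tendsto A l (𝓝 B)) {q : ι → α} {p : α}
    (hq : Tendsto q l (𝓝 p)) (hqA : ∀ᶠ i in l, q i ∈ A i) : p ∈ B := by
  have hle : ∀ᶠ i in l, infDist p B ≤ dist p (q i) + dist (A i) B := hqA.mono fun i hi =>
    calc infDist p B ≤ infDist (q i) B + dist p (q i) := infDist_le_infDist_add_dist
      _ ≤ infDist (q i) (A i) + dist (A i) B + dist p (q i) := by
        gcongr; exact infDist_le_infDist_add_hausdorffDist (edist_ne_top (A i) B)
      _ = dist p (q i) + dist (A i) B := by rw [infDist_zero_of_mem hi]; ring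
  have hlim : Tendsto (fun i => dist p (q i) + dist (A i) B) l (𝓝 0) := by
    simpa using (tendsto_const_nhds (x := p)).dist hq |>.add (tendsto_iff_dist_tendsto_zero.1 hA)
  have h0 : infDist p B = 0 := le_antisymm (ge_of_tendsto hlim hle) infDist_nonneg
  exact (B.isCompact.isClosed.mem_iff_infDist_zero B.nonempty).2 h0

theorem prod_self_subset_of_tendsto [l.NeBot] (hA : Tendsto A l (𝓝 B)) {s : Set (α × α)}
    (hs : IsClosed s) (hAs : ∀ i, (A i : Set α) ×ˢ (A i : Set α) ⊆ s) :
    (B : Set α) ×ˢ (B : Set α) ⊆ s := by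
  rintro ⟨p, p'⟩ ⟨hp, hp'⟩
  obtain ⟨q, hqA, hq⟩ := exists_tendsto_of_mem hA hp
  obtain ⟨q', hqA', hq'⟩ := exists_tendsto_of_mem hA hp'
  exact hs.mem_of_tendsto (hq.prodMk_nhds hq') (.of_forall fun i => hAs i ⟨hqA i, hqA' i⟩)

theorem mem_image_of_tendsto [CompactSpace α] {β : Type*} [TopologicalSpace β] [T2Space β]
    {A : ℕ → NonemptyCompacts α} (hA : Tendsto A atTop (𝓝 B)) {f : α → β} (hf : Continuous f)
    {q : ℕ → α} (hqA : ∀ i, q i ∈ A i) {y : β} (hy : Tendsto (f ∘ q) atTop (𝓝 y)) :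
    y ∈ f '' B := by
  obtain ⟨x, -, ψ, hψ, hx⟩ := isCompact_univ.tendsto_subseq fun i => mem_univ (q i)
  refine ⟨x, mem_of_tendsto (hA.comp hψ.tendsto_atTop) hx (.of_forall fun j => hqA _), ?_⟩
  exact tendsto_nhds_unique ((hf.tendsto x).comp hx) (hy.comp hψ.tendsto_atTop)

end TopologicalSpace.NonemptyCompacts

section LipschitzPairs

variable {α β : Type*} [PseudoMetricSpace α]

/-- A set `Γ ⊆ α × β` is the graph of a `K`-Lipschitz map on its projection iff
`Γ ×ˢ Γ ⊆ lipschitzPairs K`. -/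
def lipschitzPairs [PseudoMetricSpace β] (K : ℝ≥0) : Set ((α × β) × (α × β)) :=
  {x | dist x.1.2 x.2.2 ≤ K * dist x.1.1 x.2.1}

theorem isClosed_lipschitzPairs [PseudoMetricSpace β] (K : ℝ≥0) :
    IsClosed (lipschitzPairs (α := α) (β := β) K) :=
  isClosed_le (by fun_prop) (by fun_prop)

theorem LipschitzOnWith.graphOn_prod_self_subset_lipschitzPairs [PseudoMetricSpace β]
    {K : ℝ≥0} {f : α → β} {s : Set α} (hf : LipschitzOnWith K f s) :
    s.graphOn f ×ˢ s.graphOn f ⊆ lipschitzPairs K := by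
  rintro ⟨-, -⟩ ⟨⟨x, hx, rfl⟩, ⟨x', hx', rfl⟩⟩
  exact hf.dist_le_mul x hx x' hx'

theorem exists_lipschitzOnWith_graphOn_eq [MetricSpace β] [Nonempty β] {K : ℝ≥0}
    {Γ : Set (α × β)} (hΓ : Γ ×ˢ Γ ⊆ lipschitzPairs K) :
    ∃ g : α → β, LipschitzOnWith K g (Prod.fst '' Γ) ∧ (Prod.fst '' Γ).graphOn g = Γ := by
  have hinj : InjOn Prod.fst Γ := fun p hp q hq hpq => by
    have h : dist p.2 q.2 ≤ K * dist p.1 q.1 := hΓ (mk_mem_prod hp hq)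
    rw [hpq, dist_self, mul_zero] at h
    exact Prod.ext hpq (dist_le_zero.1 h)
  obtain ⟨g, hg⟩ := exists_eq_graphOn_image_fst.2 hinj
  refine ⟨g, LipschitzOnWith.of_dist_le_mul fun x hx x' hx' => ?_, hg.symm⟩
  rw [hg] at hΓ
  exact hΓ (mk_mem_prod (mem_image_of_mem _ hx) (mem_image_of_mem _ hx'))

end LipschitzPairs

theorem graphs_converge_to_lipschitz_graph_general {X Y : Type*}
    [MetricSpace X] [CompactSpace X] [MetricSpace Y] [CompactSpace Y]
    (S : ℝ) (E : ℕ → Set X) (F : ℕ → X → Y)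
    (hfin : ∀ l, (E l).Finite) (hne : ∀ l, (E l).Nonempty)
    (hlip : ∀ l, LipschitzOnWith S.toNNReal (F l) (E l)) :
    ∃ (K : Set X) (g : X → Y) (φ : ℕ → ℕ),
      IsCompact K ∧ K.Nonempty ∧ LipschitzOnWith S.toNNReal g K ∧ StrictMono φ ∧
      Tendsto (fun i =>
          hausdorffDist {p : X × Y | p.1 ∈ E (φ i) ∧ p.2 = F (φ i) p.1}
            {p : X × Y | p.1 ∈ K ∧ p.2 = g p.1})
        atTop (nhds 0) ∧
      ∀ (y : Y) (ys : ℕ → Y), (∀ i, ys i ∈ F (φ i) '' E (φ i)) →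
        Tendsto ys atTop (nhds y) → y ∈ g '' K := by
  have : Nonempty Y := ⟨F 0 (hne 0).some⟩
  have hgraph : ∀ (s : Set X) (f : X → Y), {p : X × Y | p.1 ∈ s ∧ p.2 = f p.1} = s.graphOn f :=
    fun s f => by ext; simp [eq_comm]
  let G : ℕ → NonemptyCompacts (X × Y) := fun l =>
    ⟨⟨(E l).graphOn (F l), ((hfin l).image _).isCompact⟩, (hne l).graphOn⟩
  obtain ⟨Γ, -, φ, hφ, hGΓ⟩ := isCompact_univ.tendsto_subseq fun l => mem_univ (G l)
  obtain ⟨g, hg, hgΓ⟩ := exists_lipschitzOnWith_graphOn_eq <|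
    NonemptyCompacts.prod_self_subset_of_tendsto hGΓ (isClosed_lipschitzPairs _)
      fun i => (hlip (φ i)).graphOn_prod_self_subset_lipschitzPairs
  refine ⟨Prod.fst '' (Γ : Set (X × Y)), g, φ, Γ.isCompact.image continuous_fst,
    Γ.nonempty.image _, hg, hφ, ?_, fun y ys hys hy => ?_⟩
  · simp_rw [hgraph, hgΓ]
    exact tendsto_iff_dist_tendsto_zero.1 hGΓ
  · choose xs hxs hys using hys
    have hy' := NonemptyCompacts.mem_image_of_tendsto hGΓ continuous_snd
      (q := fun i => (xs i, ys i)) (fun i => ⟨xs i, hxs i, by rw [← hys]⟩) hy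
    rwa [← hgΓ, image_snd_graphOn] at hy'

/-- Blaschke-selection / Arzelà–Ascoli with variable domains: given compact metric
spaces `X`, `Y`, and `S`-Lipschitz maps `F l` defined on finite nonempty sets
`E l ⊆ X`, there exist a compact set `K ⊆ X`, an `S`-Lipschitz map `g : K → Y`,
and a subsequence `φ` along which the graphs of the `F l` converge in the
Hausdorff metric to the graph of `g`; in particular any limit of points of the
images `F (φ i) '' (E (φ i))` belongs to `g '' K`. -/
theorem graphs_converge_to_lipschitz_graph {X Y : Type*}
    [MetricSpace X] [CompactSpace X] [MetricSpace Y] [CompactSpace Y]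
    (S : ℝ) (hS : 0 ≤ S) (E : ℕ → Set X) (F : ℕ → X → Y)
    (hfin : ∀ l, (E l).Finite) (hne : ∀ l, (E l).Nonempty)
    (hlip : ∀ l, LipschitzOnWith S.toNNReal (F l) (E l)) :
    ∃ (K : Set X) (g : X → Y) (φ : ℕ → ℕ),
      IsCompact K ∧ K.Nonempty ∧ LipschitzOnWith S.toNNReal g K ∧ StrictMono φ ∧
      Tendsto (fun i =>
          hausdorffDist {p : X × Y | p.1 ∈ E (φ i) ∧ p.2 = F (φ i) p.1}
            {p : X × Y | p.1 ∈ K ∧ p.2 = g p.1})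
        atTop (nhds 0) ∧
      ∀ (y : Y) (ys : ℕ → Y), (∀ i, ys i ∈ F (φ i) '' E (φ i)) →
        Tendsto ys atTop (nhds y) → y ∈ g '' K :=
  graphs_converge_to_lipschitz_graph_general S E F hfin hne hlip
end
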